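/- Let N ≥ 2 be an integer, s ∈ (1/2, 1), and Ω ⊆ ℝ^N an open set. Let φ : ℝ → ℝ be a convex, continuously differentiable function with φ(0) = 0 whose derivative φ' is Lipschitz and bounded. Let u : ℝ^N → ℝ be a bounded measurable function with Q_{N,s,Ω}(u) < ∞. Then for every ψ ∈ C_c^∞(Ω) with ψ ≥ 0: ∫_Ω ∫_Ω (φ(u(x)) − φ(u(y)))·(ψ(x) − ψ(y))/|x − y|^{N+2s} dx dy ≤ ∫_Ω ∫_Ω (u(x) − u(y))·(φ'(u(x))ψ(x) − φ'(u(y))ψ(y))/|x − y|^{N+2s} dx dy (both double integrals being absolutely convergent). This expresses the weak inequality (−Δ)^s_Ω φ(u) ≤ φ'(u)·(−Δ)^s_Ω u in Ω. -/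

import Mathlib

open MeasureTheory Real Filter Topology Set
open scoped ENNReal NNReal

noncomputable section

/-- Euclidean space ℝ^N. -/
abbrev Euc (N : ℕ) := EuclideanSpace ℝ (Fin N)

/-- The normalization constant c_{N,s}. -/
def cNs (N : ℕ) (s : ℝ) : ℝ :=
  s * (4 : ℝ) ^ s * Real.Gamma (((N : ℝ) + 2 * s) / 2) /
    (Real.pi ^ ((N : ℝ) / 2) * Real.Gamma (1 - s))

/-- The Gagliardo quadratic form Q_{N,s,U}. -/
def gagliardo (N : ℕ) (s : ℝ) (U : Set (Euc N)) (u : Euc N → ℝ) : ℝ :=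
  (cNs N s / 2) * ∫ x in U, ∫ y in U, (u x - u y) ^ 2 / ‖x - y‖ ^ ((N : ℝ) + 2 * s)

/-- The L^p norm of u on a set U. -/
def lpNormOn (N : ℕ) (p : ℝ) (U : Set (Euc N)) (u : Euc N → ℝ) : ℝ :=
  (∫ x in U, |u x| ^ p) ^ (1 / p)

/-- The fractional critical Sobolev exponent 2*_s = 2N/(N-2s). -/
def critExp (N : ℕ) (s : ℝ) : ℝ := 2 * (N : ℝ) / ((N : ℝ) - 2 * s)

/-- Smooth compactly supported test function in U. -/
def testFun (N : ℕ) (U : Set (Euc N)) (u : Euc N → ℝ) : Prop :=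
  ContDiff ℝ (⊤ : ℕ∞) u ∧ HasCompactSupport u ∧ tsupport u ⊆ U

/-- The critical fractional Sobolev constant S_{N,s}(U). -/
def sobolevConst (N : ℕ) (s : ℝ) (U : Set (Euc N)) : ℝ :=
  sInf { r | ∃ u, testFun N U u ∧ ¬ (∀ x, u x = 0) ∧
    r = gagliardo N s U u / (lpNormOn N (critExp N s) U u) ^ 2 }

/-- The open cylinder B'_r × (-r, r) in ℝ^{N-1} × ℝ. -/
def cylinder (N : ℕ) (r : ℝ) : Set (EuclideanSpace ℝ (Fin (N - 1)) × ℝ) :=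
  (Metric.ball 0 r) ×ˢ (Set.Ioo (-r) r)

/-- A bounded open set is Lipschitz: near each boundary point the boundary is the
bi-Lipschitz image of a flat piece. -/
def IsLipschitzSet (N : ℕ) (Ω : Set (Euc N)) : Prop :=
  ∀ q ∈ frontier Ω, ∃ (r C : ℝ) (Φ : EuclideanSpace ℝ (Fin (N - 1)) × ℝ → Euc N),
    0 < r ∧ 1 < C ∧
    (∀ x ∈ cylinder N r, ∀ y ∈ cylinder N r,
      C⁻¹ * dist x y ≤ dist (Φ x) (Φ y) ∧ dist (Φ x) (Φ y) ≤ C * dist x y) ∧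
    IsOpen (Φ '' cylinder N r) ∧ q ∈ Φ '' cylinder N r ∧
    Φ '' ((Metric.ball 0 r) ×ˢ (Set.Ioo 0 r)) ⊆ Ω ∧
    Φ '' ((Metric.ball 0 r) ×ˢ ({0} : Set ℝ)) ⊆ frontier Ω

/-- Membership in H^s_0(U): approximation by smooth compactly supported functions
in L²(U) and in the Gagliardo form. -/
def memHs0 (N : ℕ) (s : ℝ) (U : Set (Euc N)) (u : Euc N → ℝ) : Prop :=
  ∃ v : ℕ → Euc N → ℝ, (∀ k, testFun N U (v k)) ∧
    Tendsto (fun k => ∫ x in U, (v k x - u x) ^ 2) atTop (nhds 0) ∧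
    Tendsto (fun k => gagliardo N s U (fun x => v k x - u x)) atTop (nhds 0)

/-- A radial function on ℝ^N. -/
def IsRadial (N : ℕ) (u : Euc N → ℝ) : Prop :=
  ∀ x y : Euc N, ‖x‖ = ‖y‖ → u x = u y

/-- The open unit ball of ℝ^N. -/
def unitBall (N : ℕ) : Set (Euc N) := Metric.ball 0 1

/-- The radial critical Sobolev constant S_{N,s,rad}(B,h) on the unit ball. -/
def sobolevConstRad (N : ℕ) (s : ℝ) (h : Euc N → ℝ) : ℝ :=
  sInf { r | ∃ u, testFun N (unitBall N) u ∧ IsRadial N u ∧ ¬ (∀ x, u x = 0) ∧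
    r = (gagliardo N s (unitBall N) u + ∫ x in unitBall N, h x * (u x) ^ 2) /
        (lpNormOn N (critExp N s) (unitBall N) u) ^ 2 }

/-- Membership in H^s_{0,rad}(B): radial, approximated by radial test functions. -/
def memHs0rad (N : ℕ) (s : ℝ) (u : Euc N → ℝ) : Prop :=
  IsRadial N u ∧ ∃ v : ℕ → Euc N → ℝ,
    (∀ k, testFun N (unitBall N) (v k) ∧ IsRadial N (v k)) ∧
    Tendsto (fun k => ∫ x in unitBall N, (v k x - u x) ^ 2) atTop (nhds 0) ∧
    Tendsto (fun k => gagliardo N s (unitBall N) (fun x => v k x - u x)) atTop (nhds 0)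

/-- The fractional Laplacian of a test function. -/
def fracLap (N : ℕ) (s : ℝ) (φ : Euc N → ℝ) (x : Euc N) : ℝ :=
  (cNs N s / 2) * ∫ z : Euc N, (2 * φ x - φ (x + z) - φ (x - z)) / ‖z‖ ^ ((N : ℝ) + 2 * s)

lemma aux_tangent {φ : ℝ → ℝ} (hconv : ConvexOn ℝ Set.univ φ) (hdiff : Differentiable ℝ φ)
    (a b : ℝ) : deriv φ b * (a - b) ≤ φ a - φ b := by
  rcases lt_trichotomy a b with h | h | h
  · have h2 := hconv.slope_le_deriv (Set.mem_univ a) (Set.mem_univ b) h (hdiff b)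
    rw [slope_def_field, div_le_iff₀ (by linarith : (0:ℝ) < b - a)] at h2
    nlinarith
  · simp [h]
  · have h2 := hconv.deriv_le_slope (Set.mem_univ b) (Set.mem_univ a) h (hdiff b)
    rw [slope_def_field, le_div_iff₀ (by linarith : (0:ℝ) < a - b)] at h2
    nlinarith

lemma aux_radial (N : ℕ) {c B α : ℝ} (hc : 0 < c) (hB : 0 < B)
    (hα1 : (N:ℝ) < α) (hα2 : α < (N:ℝ) + 2) (hα0 : 2 < α) :
    Integrable (fun z : Euc N => min (c * ‖z‖ ^ (2 - α)) (B * ‖z‖ ^ (-α))) := by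
  have hαpos : (0:ℝ) < α := by linarith
  set G : Euc N → ℝ := fun z => min (c * ‖z‖ ^ (2 - α)) (B * ‖z‖ ^ (-α)) with hGdef
  have hGnn : ∀ z, 0 ≤ G z := fun z =>
    le_min (mul_nonneg hc.le (Real.rpow_nonneg (norm_nonneg _) _))
      (mul_nonneg hB.le (Real.rpow_nonneg (norm_nonneg _) _))
  have hGmeas : Measurable G := by
    apply Measurable.min <;> fun_prop
  refine ⟨hGmeas.aestronglyMeasurable, ?_⟩
  rw [hasFiniteIntegral_iff_ofReal (Eventually.of_forall hGnn),
    lintegral_eq_lintegral_meas_le volume (Eventually.of_forall hGnn) hGmeas.aemeasurable]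
  -- superlevel sets are contained in balls
  have hsub : ∀ t : ℝ, 0 < t → {z : Euc N | t ≤ G z} ⊆
      Metric.closedBall 0 ((B / t) ^ α⁻¹) ∩ Metric.closedBall 0 ((c / t) ^ (α - 2)⁻¹) := by
    intro t ht z hz
    have hz0 : z ≠ 0 := by
      rintro rfl
      simp only [hGdef, Set.mem_setOf_eq, norm_zero,
        Real.zero_rpow (by linarith : 2 - α ≠ 0), Real.zero_rpow (by linarith : -α ≠ 0),
        mul_zero, min_self] at hz
      linarith
    have hr : 0 < ‖z‖ := norm_pos_iff.2 hz0
    have h1 : t ≤ B * ‖z‖ ^ (-α) := le_trans hz (min_le_right _ _)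
    have h2 : t ≤ c * ‖z‖ ^ (2 - α) := le_trans hz (min_le_left _ _)
    constructor
    · rw [Real.rpow_neg hr.le] at h1
      have hpow : 0 < ‖z‖ ^ α := Real.rpow_pos_of_pos hr α
      have : ‖z‖ ^ α ≤ B / t := by
        rw [le_div_iff₀ ht]
        calc ‖z‖ ^ α * t ≤ ‖z‖ ^ α * (B * (‖z‖ ^ α)⁻¹) := by
              exact mul_le_mul_of_nonneg_left h1 hpow.le
          _ = B := by field_simp
      have := Real.rpow_le_rpow (Real.rpow_nonneg (norm_nonneg z) α) this
        (inv_nonneg.2 hαpos.le)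
      rwa [Real.rpow_rpow_inv (norm_nonneg z) hαpos.ne', Metric.mem_closedBall,
        dist_zero_right] at *
    · have h2eq : (2 : ℝ) - α = -(α - 2) := by ring
      rw [h2eq, Real.rpow_neg hr.le] at h2
      have hα2pos : (0:ℝ) < α - 2 := by linarith
      have hpow : 0 < ‖z‖ ^ (α - 2) := Real.rpow_pos_of_pos hr _
      have : ‖z‖ ^ (α - 2) ≤ c / t := by
        rw [le_div_iff₀ ht]
        calc ‖z‖ ^ (α - 2) * t ≤ ‖z‖ ^ (α - 2) * (c * (‖z‖ ^ (α - 2))⁻¹) := by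
              exact mul_le_mul_of_nonneg_left h2 hpow.le
          _ = c := by field_simp
      have := Real.rpow_le_rpow (Real.rpow_nonneg (norm_nonneg z) _) this
        (inv_nonneg.2 hα2pos.le)
      rwa [Real.rpow_rpow_inv (norm_nonneg z) hα2pos.ne', Metric.mem_closedBall,
        dist_zero_right] at *
  set C : ℝ≥0∞ := volume (Metric.ball (0 : Euc N) 1) with hC
  have hCne : C ≠ ⊤ := measure_ball_lt_top.ne
  set e1 : ℝ := (N : ℝ) / α with he1
  set e2 : ℝ := (N : ℝ) / (α - 2) with he2
  have hNnn : (0:ℝ) ≤ (N:ℝ) := Nat.cast_nonneg N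
  have hα2pos : (0:ℝ) < α - 2 := by linarith
  have hfrk : ((Module.finrank ℝ (Euc N) : ℕ) : ℝ) = (N : ℝ) := by
    simp [finrank_euclideanSpace_fin]
  have hball1 : ∀ t : ℝ, 0 < t → volume {z : Euc N | t ≤ G z} ≤
      ENNReal.ofReal (B ^ e1 * t ^ (-e1)) * C := by
    intro t ht
    calc volume {z : Euc N | t ≤ G z}
        ≤ volume (Metric.closedBall (0 : Euc N) ((B / t) ^ α⁻¹)) :=
          measure_mono ((hsub t ht).trans inter_subset_left)
      _ = ENNReal.ofReal (((B / t) ^ α⁻¹) ^ Module.finrank ℝ (Euc N)) * C :=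
          Measure.addHaar_closedBall _ _ (Real.rpow_nonneg (div_nonneg hB.le ht.le) _)
      _ = ENNReal.ofReal (B ^ e1 * t ^ (-e1)) * C := by
          congr 1
          rw [← Real.rpow_natCast ((B / t) ^ α⁻¹) (Module.finrank ℝ (Euc N)),
            ← Real.rpow_mul (div_nonneg hB.le ht.le), hfrk, inv_mul_eq_div, ← he1,
            Real.div_rpow hB.le ht.le, Real.rpow_neg ht.le, div_eq_mul_inv]
  have hball2 : ∀ t : ℝ, 0 < t → volume {z : Euc N | t ≤ G z} ≤
      ENNReal.ofReal (c ^ e2 * t ^ (-e2)) * C := by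
    intro t ht
    calc volume {z : Euc N | t ≤ G z}
        ≤ volume (Metric.closedBall (0 : Euc N) ((c / t) ^ (α - 2)⁻¹)) :=
          measure_mono ((hsub t ht).trans inter_subset_right)
      _ = ENNReal.ofReal (((c / t) ^ (α - 2)⁻¹) ^ Module.finrank ℝ (Euc N)) * C :=
          Measure.addHaar_closedBall _ _ (Real.rpow_nonneg (div_nonneg hc.le ht.le) _)
      _ = ENNReal.ofReal (c ^ e2 * t ^ (-e2)) * C := by
          congr 1
          rw [← Real.rpow_natCast ((c / t) ^ (α - 2)⁻¹) (Module.finrank ℝ (Euc N)),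
            ← Real.rpow_mul (div_nonneg hc.le ht.le), hfrk, inv_mul_eq_div, ← he2,
            Real.div_rpow hc.le ht.le, Real.rpow_neg ht.le, div_eq_mul_inv]
  calc ∫⁻ t in Ioi (0:ℝ), volume {z : Euc N | t ≤ G z}
      ≤ ∫⁻ t in Ioc (0:ℝ) 1 ∪ Ioi 1, volume {z : Euc N | t ≤ G z} :=
        lintegral_mono_set Ioi_subset_Ioc_union_Ioi
    _ ≤ (∫⁻ t in Ioc (0:ℝ) 1, volume {z : Euc N | t ≤ G z}) +
        ∫⁻ t in Ioi (1:ℝ), volume {z : Euc N | t ≤ G z} := lintegral_union_le _ _ _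
    _ < ⊤ := by
        refine ENNReal.add_lt_top.2 ⟨?_, ?_⟩
        · have hint1 : IntegrableOn (fun t : ℝ => B ^ e1 * t ^ (-e1)) (Ioc 0 1) := by
            have h := intervalIntegral.intervalIntegrable_rpow' (a := 0) (b := 1)
              (show (-1:ℝ) < -e1 by
                have : e1 < 1 := (div_lt_one hαpos).2 hα1
                linarith)
            rw [intervalIntegrable_iff_integrableOn_Ioc_of_le zero_le_one] at h
            exact h.const_mul _
          calc ∫⁻ t in Ioc (0:ℝ) 1, volume {z : Euc N | t ≤ G z}
              ≤ ∫⁻ t in Ioc (0:ℝ) 1, ENNReal.ofReal (B ^ e1 * t ^ (-e1)) * C :=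
                setLIntegral_mono' measurableSet_Ioc (fun t ht => hball1 t ht.1)
            _ = (∫⁻ t in Ioc (0:ℝ) 1, ENNReal.ofReal (B ^ e1 * t ^ (-e1))) * C :=
                lintegral_mul_const' C _ hCne
            _ < ⊤ := ENNReal.mul_lt_top hint1.setLIntegral_lt_top measure_ball_lt_top
        · have hint2 : IntegrableOn (fun t : ℝ => c ^ e2 * t ^ (-e2)) (Ioi 1) := by
            have h := integrableOn_Ioi_rpow_of_lt
              (show -e2 < -1 by
                have : 1 < e2 := (one_lt_div hα2pos).2 (by linarith)
                linarith) one_pos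
            exact h.const_mul _
          calc ∫⁻ t in Ioi (1:ℝ), volume {z : Euc N | t ≤ G z}
              ≤ ∫⁻ t in Ioi (1:ℝ), ENNReal.ofReal (c ^ e2 * t ^ (-e2)) * C :=
                setLIntegral_mono' measurableSet_Ioi (fun t ht => hball2 t (lt_trans one_pos ht))
            _ = (∫⁻ t in Ioi (1:ℝ), ENNReal.ofReal (c ^ e2 * t ^ (-e2))) * C :=
                lintegral_mul_const' C _ hCne
            _ < ⊤ := ENNReal.mul_lt_top hint2.setLIntegral_lt_top measure_ball_lt_top

lemma aux_G_nonneg (N : ℕ) {c B α : ℝ} (hc : 0 ≤ c) (hB : 0 ≤ B) (z : Euc N) :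
    0 ≤ min (c * ‖z‖ ^ (2 - α)) (B * ‖z‖ ^ (-α)) :=
  le_min (mul_nonneg hc (Real.rpow_nonneg (norm_nonneg _) _))
    (mul_nonneg hB (Real.rpow_nonneg (norm_nonneg _) _))

lemma aux_psi_integrable (N : ℕ) {α : ℝ} (hα1 : (N:ℝ) < α) (hα2 : α < (N:ℝ) + 2) (hα0 : 2 < α)
    (ψ : Euc N → ℝ) (hsm : Continuous ψ) (hLψ : ∃ L : NNReal, LipschitzWith L ψ)
    (hsupp : HasCompactSupport ψ) :
    Integrable (fun p : Euc N × Euc N => (ψ p.1 - ψ p.2) ^ 2 / ‖p.1 - p.2‖ ^ α) := by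
  obtain ⟨L, hL⟩ := hLψ
  obtain ⟨Mb, hMb⟩ := hsupp.exists_bound_of_continuous hsm
  set c : ℝ := (L : ℝ) ^ 2 + 1 with hcdef
  set B : ℝ := (2 * Mb) ^ 2 + 1 with hBdef
  have hc : (0:ℝ) < c := by positivity
  have hB : (0:ℝ) < B := by positivity
  set G : Euc N → ℝ := fun z => min (c * ‖z‖ ^ (2 - α)) (B * ‖z‖ ^ (-α)) with hGdef
  have hGint : Integrable G := aux_radial N hc hB hα1 hα2 hα0
  have hGnn : ∀ z, 0 ≤ G z := fun z => aux_G_nonneg N hc.le hB.le z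
  -- pointwise bound
  have hpt : ∀ x y : Euc N, (ψ x - ψ y) ^ 2 / ‖x - y‖ ^ α ≤ G (x - y) := by
    intro x y
    by_cases hxy : x = y
    · subst hxy; simpa using hGnn 0
    · have hr : 0 < ‖x - y‖ := by
        rw [norm_pos_iff, sub_ne_zero]; exact hxy
      have hrα : 0 < ‖x - y‖ ^ α := Real.rpow_pos_of_pos hr α
      have hlip : |ψ x - ψ y| ≤ (L : ℝ) * ‖x - y‖ := by
        have := hL.dist_le_mul x y
        rwa [Real.dist_eq, dist_eq_norm] at this
      have hbd : |ψ x - ψ y| ≤ 2 * Mb := by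
        have h1 := hMb x
        have h2 := hMb y
        rw [Real.norm_eq_abs] at h1 h2
        calc |ψ x - ψ y| ≤ |ψ x| + |ψ y| := abs_sub _ _
          _ ≤ 2 * Mb := by linarith
      refine le_min ?_ ?_
      · have hnum : (ψ x - ψ y) ^ 2 ≤ c * ‖x - y‖ ^ (2:ℕ) := by
          have h2 : (ψ x - ψ y) ^ 2 = |ψ x - ψ y| ^ 2 := (sq_abs _).symm
          have h3 : |ψ x - ψ y| ^ 2 ≤ ((L : ℝ) * ‖x - y‖) ^ 2 :=
            pow_le_pow_left₀ (abs_nonneg _) hlip 2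
          rw [h2]
          calc |ψ x - ψ y| ^ 2 ≤ ((L : ℝ) * ‖x - y‖) ^ 2 := h3
            _ = (L:ℝ)^2 * ‖x - y‖ ^ (2:ℕ) := by ring
            _ ≤ c * ‖x - y‖ ^ (2:ℕ) := by
                have : (0:ℝ) ≤ ‖x - y‖ ^ (2:ℕ) := by positivity
                nlinarith [this]
        rw [div_le_iff₀ hrα]
        calc (ψ x - ψ y) ^ 2 ≤ c * ‖x - y‖ ^ (2:ℕ) := hnum
          _ = c * ‖x - y‖ ^ ((2:ℝ)) := by rw [← Real.rpow_natCast ‖x - y‖ 2]; norm_num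
          _ = c * ‖x - y‖ ^ (2 - α) * ‖x - y‖ ^ α := by
              rw [mul_assoc, ← Real.rpow_add hr]; ring_nf
      · have hnum : (ψ x - ψ y) ^ 2 ≤ B := by
          have h2 : (ψ x - ψ y) ^ 2 = |ψ x - ψ y| ^ 2 := (sq_abs _).symm
          nlinarith [abs_nonneg (ψ x - ψ y)]
        rw [div_le_iff₀ hrα, Real.rpow_neg hr.le, mul_assoc,
          inv_mul_cancel₀ hrα.ne', mul_one]
        exact hnum
  -- the two dominating integrable pieces
  set KS : Set (Euc N) := tsupport ψ with hKS
  have hKSc : IsCompact KS := hsupp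
  have hKSm : MeasurableSet KS := (isClosed_tsupport ψ).measurableSet
  have hind : Integrable (KS.indicator fun _ => (1:ℝ)) := by
    rw [integrable_indicator_iff hKSm]
    exact integrableOn_const hKSc.measure_lt_top.ne
  have hGmeas : Measurable G := by apply Measurable.min <;> fun_prop
  have hvol : (volume : Measure (Euc N × Euc N)) = (volume : Measure (Euc N)).prod volume :=
    Measure.volume_eq_prod _ _
  have hF1 : Integrable (fun p : Euc N × Euc N =>
      KS.indicator (fun _ => (1:ℝ)) p.1 * G (p.1 - p.2)) := by
    have hGneg : Integrable (fun z : Euc N => G (-z)) := by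
      have := (Measure.measurePreserving_neg (volume : Measure (Euc N))).integrable_comp
        hGint.aestronglyMeasurable
      exact this.2 hGint
    have hH : Integrable (fun p : Euc N × Euc N =>
        KS.indicator (fun _ => (1:ℝ)) p.1 * G (-p.2)) (volume.prod volume) :=
      hind.mul_prod hGneg
    have hT := measurePreserving_prod_sub (volume : Measure (Euc N)) volume
    have := (hT.integrable_comp hH.aestronglyMeasurable).2 hH
    have heq : (fun p : Euc N × Euc N => KS.indicator (fun _ => (1:ℝ)) p.1 * G (p.1 - p.2)) =
        (fun p : Euc N × Euc N => KS.indicator (fun _ => (1:ℝ)) p.1 * G (-p.2)) ∘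
          (fun z : Euc N × Euc N => (z.1, z.2 - z.1)) := by
      funext p; simp [Function.comp, neg_sub]
    rw [hvol, heq]
    exact this
  have hF2 : Integrable (fun p : Euc N × Euc N =>
      G (p.1 - p.2) * KS.indicator (fun _ => (1:ℝ)) p.2) := by
    have hH : Integrable (fun p : Euc N × Euc N =>
        G p.1 * KS.indicator (fun _ => (1:ℝ)) p.2) (volume.prod volume) :=
      hGint.mul_prod hind
    have hT := measurePreserving_sub_prod (volume : Measure (Euc N)) volume
    have := (hT.integrable_comp hH.aestronglyMeasurable).2 hH
    have heq : (fun p : Euc N × Euc N => G (p.1 - p.2) * KS.indicator (fun _ => (1:ℝ)) p.2) =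
        (fun p : Euc N × Euc N => G p.1 * KS.indicator (fun _ => (1:ℝ)) p.2) ∘
          (fun z : Euc N × Euc N => (z.1 - z.2, z.2)) := by
      funext p; simp [Function.comp]
    rw [hvol, heq]
    exact this
  refine Integrable.mono' (hF1.add hF2) ?_ (Eventually.of_forall fun p => ?_)
  · apply Measurable.aestronglyMeasurable
    fun_prop
  · have hFnn : 0 ≤ (ψ p.1 - ψ p.2) ^ 2 / ‖p.1 - p.2‖ ^ α :=
      div_nonneg (sq_nonneg _) (Real.rpow_nonneg (norm_nonneg _) _)
    rw [Real.norm_eq_abs, abs_of_nonneg hFnn]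
    simp only [Pi.add_apply]
    by_cases h1 : p.1 ∈ KS
    · have e1 : KS.indicator (fun _ => (1:ℝ)) p.1 = 1 := Set.indicator_of_mem h1 _
      have e2 : 0 ≤ G (p.1 - p.2) * KS.indicator (fun _ => (1:ℝ)) p.2 :=
        mul_nonneg (hGnn _) (Set.indicator_nonneg (fun _ _ => zero_le_one) _)
      have := hpt p.1 p.2
      rw [e1, one_mul]
      linarith
    · by_cases h2 : p.2 ∈ KS
      · have e1 : KS.indicator (fun _ => (1:ℝ)) p.2 = 1 := Set.indicator_of_mem h2 _
        have e2 : 0 ≤ KS.indicator (fun _ => (1:ℝ)) p.1 * G (p.1 - p.2) :=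
          mul_nonneg (Set.indicator_nonneg (fun _ _ => zero_le_one) _) (hGnn _)
        have := hpt p.1 p.2
        rw [e1, mul_one]
        linarith
      · have z1 : ψ p.1 = 0 := image_eq_zero_of_notMem_tsupport h1
        have z2 : ψ p.2 = 0 := image_eq_zero_of_notMem_tsupport h2
        have e2 : 0 ≤ KS.indicator (fun _ => (1:ℝ)) p.1 * G (p.1 - p.2) :=
          mul_nonneg (Set.indicator_nonneg (fun _ _ => zero_le_one) _) (hGnn _)
        have e3 : 0 ≤ G (p.1 - p.2) * KS.indicator (fun _ => (1:ℝ)) p.2 :=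
          mul_nonneg (hGnn _) (Set.indicator_nonneg (fun _ _ => zero_le_one) _)
        rw [z1, z2]
        simp only [sub_zero, sub_self]
        rw [zero_pow (by norm_num), zero_div]
        linarith


set_option maxHeartbeats 1000000 in
/-- the weak inequality (−Δ)^s_Ω φ(u) ≤ φ'(u)·(−Δ)^s_Ω u for a convex C¹
function φ with φ(0)=0, Lipschitz bounded derivative, tested on nonnegative ψ ∈ C_c^∞(Ω). -/
theorem statement9 (N : ℕ) (hN : 2 ≤ N) (s : ℝ) (hs : s ∈ Set.Ioo (1/2 : ℝ) 1)
    (Ω : Set (Euc N)) (hΩo : IsOpen Ω)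
    (φ : ℝ → ℝ) (hconv : ConvexOn ℝ Set.univ φ) (hC1 : ContDiff ℝ 1 φ) (hφ0 : φ 0 = 0)
    (K : NNReal) (hLip : LipschitzWith K (deriv φ)) (M : ℝ) (hder : ∀ t : ℝ, |deriv φ t| ≤ M)
    (u : Euc N → ℝ) (hu : Measurable u) (Mu : ℝ) (hub : ∀ x, |u x| ≤ Mu)
    (hQ : IntegrableOn
      (fun p : Euc N × Euc N => (u p.1 - u p.2) ^ 2 / ‖p.1 - p.2‖ ^ ((N : ℝ) + 2 * s))
      (Ω ×ˢ Ω))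
    (ψ : Euc N → ℝ) (hψ : testFun N Ω ψ) (hψ0 : ∀ x, 0 ≤ ψ x) :
    IntegrableOn (fun p : Euc N × Euc N =>
        (φ (u p.1) - φ (u p.2)) * (ψ p.1 - ψ p.2) / ‖p.1 - p.2‖ ^ ((N : ℝ) + 2 * s))
      (Ω ×ˢ Ω) ∧
    IntegrableOn (fun p : Euc N × Euc N =>
        (u p.1 - u p.2) * (deriv φ (u p.1) * ψ p.1 - deriv φ (u p.2) * ψ p.2) /
          ‖p.1 - p.2‖ ^ ((N : ℝ) + 2 * s))
      (Ω ×ˢ Ω) ∧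
    (∫ x in Ω, ∫ y in Ω,
        (φ (u x) - φ (u y)) * (ψ x - ψ y) / ‖x - y‖ ^ ((N : ℝ) + 2 * s)) ≤
    ∫ x in Ω, ∫ y in Ω,
        (u x - u y) * (deriv φ (u x) * ψ x - deriv φ (u y) * ψ y) /
          ‖x - y‖ ^ ((N : ℝ) + 2 * s) := by
  obtain ⟨hψsm, hψsupp, hψΩ⟩ := hψ
  have hdiff : Differentiable ℝ φ := hC1.differentiable one_ne_zero
  have hM0 : 0 ≤ M := le_trans (abs_nonneg _) (hder 0)
  set α : ℝ := (N:ℝ) + 2*s with hα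
  have hN2 : (2:ℝ) ≤ (N:ℝ) := by exact_mod_cast hN
  have hα1 : (N:ℝ) < α := by
    have := hs.1; simp only [hα]; nlinarith
  have hα2 : α < (N:ℝ) + 2 := by
    have := hs.2; simp only [hα]; nlinarith
  have hα0 : (2:ℝ) < α := by linarith
  obtain ⟨Lψ, hLψ⟩ := ContDiff.lipschitzWith_of_hasCompactSupport hψsupp hψsm (by simp)
  obtain ⟨Cψ, hCψ⟩ := hψsupp.exists_bound_of_continuous hψsm.continuous
  have hCψ0 : 0 ≤ Cψ := le_trans (norm_nonneg _) (hCψ 0)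
  have hψQ : Integrable
      (fun p : Euc N × Euc N => (ψ p.1 - ψ p.2) ^ 2 / ‖p.1 - p.2‖ ^ α) :=
    aux_psi_integrable N hα1 hα2 hα0 ψ hψsm.continuous ⟨Lψ, hLψ⟩ hψsupp
  -- tangent line inequalities and Lipschitz bounds
  have htan : ∀ a b : ℝ, deriv φ b * (a - b) ≤ φ a - φ b := aux_tangent hconv hdiff
  have φLip : ∀ a b : ℝ, |φ a - φ b| ≤ M * |a - b| := by
    intro a b
    have h1 := htan a b
    have h2 := htan b a
    have h3 : |deriv φ a * (b - a)| ≤ M * |a - b| := by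
      rw [abs_mul, abs_sub_comm b a]
      exact mul_le_mul_of_nonneg_right (hder a) (abs_nonneg _)
    have h4 : |deriv φ b * (a - b)| ≤ M * |a - b| := by
      rw [abs_mul]
      exact mul_le_mul_of_nonneg_right (hder b) (abs_nonneg _)
    rw [abs_le]
    constructor
    · nlinarith [neg_abs_le (deriv φ b * (a - b))]
    · nlinarith [neg_le_abs (deriv φ a * (b - a))]
  have hKlip : ∀ a b : ℝ, |deriv φ a - deriv φ b| ≤ (K:ℝ) * |a - b| := by
    intro a b
    have := hLip.dist_le_mul a b
    rwa [Real.dist_eq, Real.dist_eq] at this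
  set C0 : ℝ := (K:ℝ) * Cψ + M with hC0
  have hC0nn : 0 ≤ C0 := by positivity
  -- numerator bounds
  have hbound1 : ∀ x y : Euc N, |(φ (u x) - φ (u y)) * (ψ x - ψ y)| ≤
      C0 * ((u x - u y) ^ 2 + (ψ x - ψ y) ^ 2) := by
    intro x y
    calc |(φ (u x) - φ (u y)) * (ψ x - ψ y)| = |φ (u x) - φ (u y)| * |ψ x - ψ y| := abs_mul _ _
      _ ≤ (M * |u x - u y|) * |ψ x - ψ y| :=
          mul_le_mul_of_nonneg_right (φLip _ _) (abs_nonneg _)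
      _ ≤ C0 * ((u x - u y) ^ 2 + (ψ x - ψ y) ^ 2) := by
          nlinarith [sq_abs (u x - u y), sq_abs (ψ x - ψ y),
            sq_nonneg (|u x - u y| - |ψ x - ψ y|), abs_nonneg (u x - u y),
            abs_nonneg (ψ x - ψ y), mul_nonneg (NNReal.coe_nonneg K) hCψ0]
  have hbound2 : ∀ x y : Euc N, |(u x - u y) * (deriv φ (u x) * ψ x - deriv φ (u y) * ψ y)| ≤
      C0 * ((u x - u y) ^ 2 + (ψ x - ψ y) ^ 2) := by
    intro x y
    have step : |deriv φ (u x) * ψ x - deriv φ (u y) * ψ y| ≤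
        (K:ℝ) * |u x - u y| * Cψ + M * |ψ x - ψ y| := by
      have e : deriv φ (u x) * ψ x - deriv φ (u y) * ψ y =
          (deriv φ (u x) - deriv φ (u y)) * ψ x + deriv φ (u y) * (ψ x - ψ y) := by ring
      rw [e]
      calc |(deriv φ (u x) - deriv φ (u y)) * ψ x + deriv φ (u y) * (ψ x - ψ y)|
          ≤ |(deriv φ (u x) - deriv φ (u y)) * ψ x| + |deriv φ (u y) * (ψ x - ψ y)| :=
            abs_add_le _ _
        _ = |deriv φ (u x) - deriv φ (u y)| * |ψ x| + |deriv φ (u y)| * |ψ x - ψ y| := by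
            rw [abs_mul, abs_mul]
        _ ≤ ((K:ℝ) * |u x - u y|) * Cψ + M * |ψ x - ψ y| := by
            have hψxb : |ψ x| ≤ Cψ := by have := hCψ x; rwa [Real.norm_eq_abs] at this
            have := hKlip (u x) (u y)
            have := hder (u y)
            gcongr <;> first
              | exact hKlip (u x) (u y)
              | exact hψxb
              | exact hder (u y)
        _ = (K:ℝ) * |u x - u y| * Cψ + M * |ψ x - ψ y| := by ring
    calc |(u x - u y) * (deriv φ (u x) * ψ x - deriv φ (u y) * ψ y)|
        = |u x - u y| * |deriv φ (u x) * ψ x - deriv φ (u y) * ψ y| := abs_mul _ _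
      _ ≤ |u x - u y| * ((K:ℝ) * |u x - u y| * Cψ + M * |ψ x - ψ y|) :=
          mul_le_mul_of_nonneg_left step (abs_nonneg _)
      _ ≤ C0 * ((u x - u y) ^ 2 + (ψ x - ψ y) ^ 2) := by
          nlinarith [sq_abs (u x - u y), sq_abs (ψ x - ψ y),
            sq_nonneg (|u x - u y| - |ψ x - ψ y|), abs_nonneg (u x - u y),
            abs_nonneg (ψ x - ψ y), mul_nonneg (NNReal.coe_nonneg K) hCψ0,
            NNReal.coe_nonneg K, hCψ0]
  -- dominating integrable function
  have hW : IntegrableOn (fun p : Euc N × Euc N =>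
      C0 * ((u p.1 - u p.2) ^ 2 / ‖p.1 - p.2‖ ^ α + (ψ p.1 - ψ p.2) ^ 2 / ‖p.1 - p.2‖ ^ α))
      (Ω ×ˢ Ω) := by
    exact (hQ.add hψQ.integrableOn).const_mul C0
  have hφm : Measurable φ := hC1.continuous.measurable
  have hφ'm : Measurable (deriv φ) := hLip.continuous.measurable
  have hψm : Measurable ψ := hψsm.continuous.measurable
  have habs : ∀ (num : Euc N × Euc N → ℝ),
      (∀ x y : Euc N, |num (x, y)| ≤ C0 * ((u x - u y) ^ 2 + (ψ x - ψ y) ^ 2)) →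
      ∀ p : Euc N × Euc N, ‖num p / ‖p.1 - p.2‖ ^ α‖ ≤
        C0 * ((u p.1 - u p.2) ^ 2 / ‖p.1 - p.2‖ ^ α + (ψ p.1 - ψ p.2) ^ 2 / ‖p.1 - p.2‖ ^ α) := by
    intro num hnum p
    have hDnn : (0:ℝ) ≤ ‖p.1 - p.2‖ ^ α := Real.rpow_nonneg (norm_nonneg _) _
    have hrhs : C0 * ((u p.1 - u p.2) ^ 2 / ‖p.1 - p.2‖ ^ α +
        (ψ p.1 - ψ p.2) ^ 2 / ‖p.1 - p.2‖ ^ α) =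
        C0 * ((u p.1 - u p.2) ^ 2 + (ψ p.1 - ψ p.2) ^ 2) / ‖p.1 - p.2‖ ^ α := by
      rw [← add_div, mul_div_assoc]
    rw [hrhs, Real.norm_eq_abs, abs_div, abs_of_nonneg hDnn]
    rcases eq_or_lt_of_le hDnn with hD | hD
    · rw [← hD, div_zero, div_zero]
    · gcongr
      · exact (hnum p.1 p.2).trans_eq (by ring_nf)

  have hm1 : Measurable (fun p : Euc N × Euc N =>
      (φ (u p.1) - φ (u p.2)) * (ψ p.1 - ψ p.2) / ‖p.1 - p.2‖ ^ α) := by fun_prop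
  have hm2 : Measurable (fun p : Euc N × Euc N =>
      (u p.1 - u p.2) * (deriv φ (u p.1) * ψ p.1 - deriv φ (u p.2) * ψ p.2) /
        ‖p.1 - p.2‖ ^ α) := by fun_prop
  have hbdd1 : IntegrableOn (fun p : Euc N × Euc N =>
      (φ (u p.1) - φ (u p.2)) * (ψ p.1 - ψ p.2) / ‖p.1 - p.2‖ ^ α) (Ω ×ˢ Ω) := by
    refine Integrable.mono' hW hm1.aestronglyMeasurable.restrict
      (Eventually.of_forall fun p => ?_)
    exact habs (fun q => (φ (u q.1) - φ (u q.2)) * (ψ q.1 - ψ q.2)) hbound1 p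
  have hbdd2 : IntegrableOn (fun p : Euc N × Euc N =>
      (u p.1 - u p.2) * (deriv φ (u p.1) * ψ p.1 - deriv φ (u p.2) * ψ p.2) /
        ‖p.1 - p.2‖ ^ α) (Ω ×ˢ Ω) := by
    refine Integrable.mono' hW hm2.aestronglyMeasurable.restrict
      (Eventually.of_forall fun p => ?_)
    exact habs (fun q => (u q.1 - u q.2) *
      (deriv φ (u q.1) * ψ q.1 - deriv φ (u q.2) * ψ q.2)) hbound2 p
  refine ⟨hbdd1, hbdd2, ?_⟩
  -- pointwise inequality
  have hle : ∀ p : Euc N × Euc N,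
      (φ (u p.1) - φ (u p.2)) * (ψ p.1 - ψ p.2) / ‖p.1 - p.2‖ ^ α ≤
      (u p.1 - u p.2) * (deriv φ (u p.1) * ψ p.1 - deriv φ (u p.2) * ψ p.2) /
        ‖p.1 - p.2‖ ^ α := by
    intro p
    have h1 := htan (u p.1) (u p.2)
    have h2 := htan (u p.2) (u p.1)
    have h2' : φ (u p.1) - φ (u p.2) ≤ deriv φ (u p.1) * (u p.1 - u p.2) := by
      have e : deriv φ (u p.1) * (u p.2 - u p.1) = -(deriv φ (u p.1) * (u p.1 - u p.2)) := by ring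
      linarith [h2, e.le, e.ge]
    have t1 : 0 ≤ (deriv φ (u p.1) * (u p.1 - u p.2) - (φ (u p.1) - φ (u p.2))) * ψ p.1 :=
      mul_nonneg (by linarith) (hψ0 _)
    have t2 : 0 ≤ ((φ (u p.1) - φ (u p.2)) - deriv φ (u p.2) * (u p.1 - u p.2)) * ψ p.2 :=
      mul_nonneg (by linarith) (hψ0 _)
    have hnum : (φ (u p.1) - φ (u p.2)) * (ψ p.1 - ψ p.2) ≤
        (u p.1 - u p.2) * (deriv φ (u p.1) * ψ p.1 - deriv φ (u p.2) * ψ p.2) := by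
      have key : (u p.1 - u p.2) * (deriv φ (u p.1) * ψ p.1 - deriv φ (u p.2) * ψ p.2)
          - (φ (u p.1) - φ (u p.2)) * (ψ p.1 - ψ p.2)
          = (deriv φ (u p.1) * (u p.1 - u p.2) - (φ (u p.1) - φ (u p.2))) * ψ p.1
          + ((φ (u p.1) - φ (u p.2)) - deriv φ (u p.2) * (u p.1 - u p.2)) * ψ p.2 := by ring
      linarith [t1, t2, key.le, key.ge]
    have hDnn : (0:ℝ) ≤ ‖p.1 - p.2‖ ^ α := Real.rpow_nonneg (norm_nonneg _) _
    rcases eq_or_lt_of_le hDnn with hD | hD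
    · rw [← hD, div_zero, div_zero]
    · gcongr
  -- convert iterated integrals to integrals over the product set
  have hvol2 : (volume : Measure (Euc N × Euc N)) = (volume : Measure (Euc N)).prod volume :=
    Measure.volume_eq_prod _ _
  have hi1 : IntegrableOn (fun p : Euc N × Euc N =>
      (φ (u p.1) - φ (u p.2)) * (ψ p.1 - ψ p.2) / ‖p.1 - p.2‖ ^ α) (Ω ×ˢ Ω)
      ((volume : Measure (Euc N)).prod volume) := by rwa [← hvol2]
  have hi2 : IntegrableOn (fun p : Euc N × Euc N =>
      (u p.1 - u p.2) * (deriv φ (u p.1) * ψ p.1 - deriv φ (u p.2) * ψ p.2) /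
        ‖p.1 - p.2‖ ^ α) (Ω ×ˢ Ω)
      ((volume : Measure (Euc N)).prod volume) := by rwa [← hvol2]
  calc (∫ x in Ω, ∫ y in Ω, (φ (u x) - φ (u y)) * (ψ x - ψ y) / ‖x - y‖ ^ α)
      = ∫ p in Ω ×ˢ Ω, (φ (u p.1) - φ (u p.2)) * (ψ p.1 - ψ p.2) / ‖p.1 - p.2‖ ^ α
          ∂((volume : Measure (Euc N)).prod volume) :=
        (MeasureTheory.setIntegral_prod _ hi1).symm
    _ ≤ ∫ p in Ω ×ˢ Ω, (u p.1 - u p.2) * (deriv φ (u p.1) * ψ p.1 - deriv φ (u p.2) * ψ p.2) /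
          ‖p.1 - p.2‖ ^ α ∂((volume : Measure (Euc N)).prod volume) := by
        rw [← hvol2]
        exact setIntegral_mono_on hbdd1 hbdd2
          (hΩo.measurableSet.prod hΩo.measurableSet) (fun p _ => hle p)
    _ = ∫ x in Ω, ∫ y in Ω, (u x - u y) * (deriv φ (u x) * ψ x - deriv φ (u y) * ψ y) /
          ‖x - y‖ ^ α := MeasureTheory.setIntegral_prod _ hi2
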